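/- Let Z be a compact metrizable space, φ a continuous flow on Z, α > 0 and L ≥ 0. Let T₀ ⊆ Z be a Borel set such that the map (s, τ) ↦ φ(s, τ) is injective on [−L, α + L] × T₀, and set B := φ([0, α] × T₀) (a Borel subset of Z). Let m₁ be a φ-invariant Borel probability measure on Z with m₁(B) > 0, and let m₂ be a Borel probability measure that is L-transported from m₁ along φ. Then |m₂(B) − m₁(B)| ≤ (2L/α) · m₁(B). -/

import Mathlib

open MeasureTheory

/-- The set `Δ^L = {(x₁,x₂) : ∃ l ∈ [−L,L], x₂ = φ(l,x₁)}` associated to a flow `φ`. -/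
def flowDelta {Z : Type*} [TopologicalSpace Z] (φ : Flow ℝ Z) (L : ℝ) : Set (Z × Z) :=
  {p : Z × Z | ∃ l ∈ Set.Icc (-L) L, p.2 = φ l p.1}

/-- The topological support of a measure: points all of whose open neighborhoods
have positive measure. -/
def measureSupport {W : Type*} [TopologicalSpace W] [MeasurableSpace W]
    (M : Measure W) : Set W :=
  {x : W | ∀ U : Set W, IsOpen U → x ∈ U → M U ≠ 0}

/-- `m₁` can be `L`-transported along the flow `φ` to `m₂`: there is a Borel probability
measure `M` on `Z × Z` with topological support contained in `Δ^L`, whose first and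
second marginals are `m₁` and `m₂` respectively. -/
def Transports {Z : Type*} [TopologicalSpace Z] [MeasurableSpace Z]
    (φ : Flow ℝ Z) (L : ℝ) (m₁ m₂ : Measure Z) : Prop :=
  ∃ M : Measure (Z × Z), IsProbabilityMeasure M ∧
    measureSupport M ⊆ flowDelta φ L ∧
    M.map Prod.fst = m₁ ∧ M.map Prod.snd = m₂

/-!
By invariance of `m₁`, the measure of a flow box `φ([a, b] × T₀)` with `[a, b] ⊆ [-L, α + L]`
depends only on `b - a`, and it is additive in `b - a` because the slices `φ(b, T₀)` are null.
So it is a nonnegative additive function `g` of the length, hence linear, and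
`g (2L) ≤ (2L / α) g α = (2L / α) m₁ B`. A transport plan supported on `Δ^L` moves points by at
most `L` along orbits, so `m₁ φ([L, α - L] × T₀) ≤ m₂ B ≤ m₁ φ([-L, α + L] × T₀)`, that is,
`g α - g (2L) ≤ m₂ B ≤ g α + g (2L)`.
-/
open Set Filter Topology Function

def AdditiveUpTo (g : ℝ → ℝ) (c : ℝ) : Prop :=
  ∀ x y, 0 ≤ x → 0 ≤ y → x + y ≤ c → g (x + y) = g x + g y

namespace AdditiveUpTo

variable {g : ℝ → ℝ} {c : ℝ}

theorem map_zero (hg : AdditiveUpTo g c) (hc : 0 ≤ c) : g 0 = 0 := by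
  simpa using hg 0 0 le_rfl le_rfl (by simpa using hc)

theorem map_nat_mul (hg : AdditiveUpTo g c) (n : ℕ) {d : ℝ} (hd : 0 ≤ d) (hnd : n * d ≤ c) :
    g (n * d) = n * g d := by
  induction n with
  | zero => simpa using hg.map_zero (by simpa using hnd)
  | succ n ih =>
    push_cast at hnd ⊢
    rw [add_one_mul] at hnd ⊢
    rw [hg _ _ (by positivity) hd hnd, ih (by linarith)]
    ring

theorem monotoneOn (hg : AdditiveUpTo g c) (hnn : ∀ x ∈ Icc 0 c, 0 ≤ g x) :
    MonotoneOn g (Icc 0 c) := by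
  intro x hx y hy hxy
  have := hg x (y - x) hx.1 (by linarith) (by linarith [hy.2])
  rw [add_sub_cancel] at this
  linarith [hnn (y - x) ⟨by linarith, by linarith [hx.1, hy.2]⟩]

theorem le_div_mul (hg : AdditiveUpTo g c) (hnn : ∀ x ∈ Icc 0 c, 0 ≤ g x) {x y : ℝ}
    (hx : 0 ≤ x) (hy : 0 < y) (hxy : x + y ≤ c) : g x ≤ x / y * g y := by
  have bound : ∀ n : ℕ, g x ≤ (x / y + 1 / (n + 1)) * g y := by
    intro n
    -- compare `x` with the first multiple `k * d` above it of `d = y / (n + 1)`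
    set d := y / (n + 1) with hd_def
    have hd : 0 < d := by positivity
    have hdy : d ≤ y := div_le_self hy.le (by linarith [n.cast_nonneg (α := ℝ)])
    set k := ⌈x / d⌉₊
    have hk : (k : ℝ) < x / d + 1 := Nat.ceil_lt_add_one (by positivity)
    have hxk : x ≤ k * d := (div_le_iff₀ hd).1 (Nat.le_ceil _)
    have hkc : k * d ≤ c := by
      have : k * d < x + d :=
        calc k * d < (x / d + 1) * d := mul_lt_mul_of_pos_right hk hd
          _ = x + d := by field_simp
      linarith
    have hnd : ((n + 1 : ℕ) : ℝ) * d = y := by push_cast; rw [hd_def]; field_simp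
    have hgy : g y = (n + 1) * g d := by
      rw [← hnd, hg.map_nat_mul _ hd.le (by linarith)]
      push_cast; ring
    have hgd : 0 ≤ g d := hnn d ⟨hd.le, by linarith⟩
    calc g x ≤ g (k * d) := hg.monotoneOn hnn ⟨hx, by linarith⟩ ⟨by positivity, hkc⟩ hxk
      _ = k * g d := hg.map_nat_mul k hd.le hkc
      _ ≤ (x / d + 1) * g d := mul_le_mul_of_nonneg_right hk.le hgd
      _ = (x / y + 1 / (n + 1)) * g y := by rw [hgy, hd_def]; field_simp
  have hlim : Tendsto (fun n : ℕ => (x / y + 1 / ((n : ℝ) + 1)) * g y) atTop (𝓝 (x / y * g y)) := by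
    simpa using (tendsto_one_div_add_atTop_nhds_zero_nat.const_add (x / y)).mul_const (g y)
  exact ge_of_tendsto' hlim bound

end AdditiveUpTo

def flowBox {Z : Type*} [TopologicalSpace Z] (φ : Flow ℝ Z) (T : Set Z) (a b : ℝ) : Set Z :=
  (fun p : ℝ × Z => φ p.1 p.2) '' (Icc a b ×ˢ T)

section FlowBox

variable {Z : Type*} [TopologicalSpace Z] (φ : Flow ℝ Z) (T : Set Z)

theorem image_flowBox (t a b : ℝ) : φ t '' flowBox φ T a b = flowBox φ T (a + t) (b + t) := by
  ext x
  simp only [flowBox, mem_image, mem_prod, mem_Icc, Prod.exists]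
  constructor
  · rintro ⟨_, ⟨s, τ, ⟨⟨hs₁, hs₂⟩, hτ⟩, rfl⟩, rfl⟩
    exact ⟨s + t, τ, ⟨⟨by linarith, by linarith⟩, hτ⟩, by rw [add_comm, φ.map_add]⟩
  · rintro ⟨s, τ, ⟨⟨hs₁, hs₂⟩, hτ⟩, rfl⟩
    refine ⟨φ (s - t) τ, ⟨s - t, τ, ⟨⟨by linarith, by linarith⟩, hτ⟩, rfl⟩, ?_⟩
    rw [← φ.map_add, add_sub_cancel]

theorem flowBox_self (b : ℝ) : flowBox φ T b b = φ b '' T := by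
  ext x
  simp [flowBox]

theorem flowBox_mono {a b a' b' : ℝ} (ha : a' ≤ a) (hb : b ≤ b') :
    flowBox φ T a b ⊆ flowBox φ T a' b' :=
  image_mono (prod_mono (Icc_subset_Icc ha hb) subset_rfl)

theorem flowBox_union {a b c : ℝ} (hab : a ≤ b) (hbc : b ≤ c) :
    flowBox φ T a b ∪ flowBox φ T b c = flowBox φ T a c := by
  rw [flowBox, flowBox, ← image_union, ← union_prod, Icc_union_Icc_eq_Icc hab hbc, flowBox]

theorem flowBox_inter_subset {a b c : ℝ}
    (hinj : InjOn (fun p : ℝ × Z => φ p.1 p.2) (Icc a c ×ˢ T)) :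
    flowBox φ T a b ∩ flowBox φ T b c ⊆ flowBox φ T b b := by
  rintro _ ⟨⟨⟨s, τ⟩, ⟨⟨hs₁, hs₂⟩, hτ⟩, rfl⟩, ⟨⟨s', τ'⟩, ⟨⟨hs'₁, hs'₂⟩, hτ'⟩, hx⟩⟩
  have hsb : b ≤ s := by
    have := hinj ⟨⟨by linarith, by linarith⟩, hτ'⟩ ⟨⟨by linarith, by linarith⟩, hτ⟩ hx
    simp only [Prod.mk.injEq] at this
    linarith [this.1]
  exact ⟨(s, τ), ⟨⟨hsb, hs₂⟩, hτ⟩, rfl⟩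

theorem flow_mem_flowBox {x : Z} {a b : ℝ} (l : ℝ) (hx : x ∈ flowBox φ T a b) :
    φ l x ∈ flowBox φ T (a + l) (b + l) :=
  image_flowBox φ T l a b ▸ mem_image_of_mem _ hx

theorem mem_flowBox_of_flow_mem {x : Z} {a b l : ℝ} (hx : φ l x ∈ flowBox φ T a b) :
    x ∈ flowBox φ T (a - l) (b - l) := by
  have := flow_mem_flowBox φ T (-l) hx
  rwa [← φ.map_add, neg_add_cancel, φ.map_zero_apply] at this

theorem measurableSet_flowBox [CompactSpace Z] [TopologicalSpace.MetrizableSpace Z]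
    [MeasurableSpace Z] [BorelSpace Z] (hT : MeasurableSet T) {a b : ℝ}
    (hinj : InjOn (fun p : ℝ × Z => φ p.1 p.2) (Icc a b ×ˢ T)) :
    MeasurableSet (flowBox φ T a b) := by
  let := TopologicalSpace.metrizableSpaceMetric Z
  exact (measurableSet_Icc.prod hT).image_of_continuousOn_injOn φ.cont'.continuousOn hinj

end FlowBox

section InvariantMeasure

variable {Z : Type*} [TopologicalSpace Z] [MeasurableSpace Z] [BorelSpace Z]
  {φ : Flow ℝ Z} {m : Measure Z}

theorem measure_flow_image (hm : ∀ t, m.map (φ t) = m) (t : ℝ) (A : Set Z) :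
    m (φ t '' A) = m A :=
  calc m (φ t '' A) = m (φ (-t) ⁻¹' A) := by rw [φ.image_eq_preimage_symm]
    _ = m.map (φ (-t)) A := ((φ.toHomeomorph (-t)).toMeasurableEquiv.map_apply A).symm
    _ = m A := by rw [hm]

theorem measure_flowBox_eq_of_sub_eq (hm : ∀ t, m.map (φ t) = m) (T : Set Z) {a b a' b' : ℝ}
    (h : b - a = b' - a') : m (flowBox φ T a b) = m (flowBox φ T a' b') := by
  obtain rfl : b' = b + (a' - a) := by linarith
  rw [← measure_flow_image hm (a' - a), image_flowBox, add_sub_cancel]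

/-- A transversal along which the flow is injective for a nondegenerate time interval is null:
its translates by the uncountably many times of that interval are disjoint and equally large. -/
theorem measure_eq_zero_of_injOn [IsFiniteMeasure m] (hm : ∀ t, m.map (φ t) = m) {T : Set Z}
    (hT : MeasurableSet T) {a b : ℝ} (hab : a < b)
    (hinj : InjOn (fun p : ℝ × Z => φ p.1 p.2) (Icc a b ×ˢ T)) : m T = 0 := by
  by_contra hpos
  have hdisj : Pairwise (Disjoint on fun t : Icc a b => φ t '' T) := by
    intro s t hst
    refine disjoint_left.2 ?_
    rintro _ ⟨τ, hτ, rfl⟩ ⟨τ', hτ', h⟩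
    exact hst (Subtype.ext (congrArg Prod.fst
      (hinj (x₁ := ((s : ℝ), τ)) (x₂ := ((t : ℝ), τ')) ⟨s.2, hτ⟩ ⟨t.2, hτ'⟩ h.symm)))
  have hcount := Measure.countable_meas_pos_of_disjoint_of_meas_iUnion_ne_top m
    (fun t : Icc a b => by
      rw [φ.image_eq_preimage_symm]; exact hT.preimage (φ.continuous_toFun _).measurable)
    hdisj (measure_ne_top _ _)
  simp only [measure_flow_image hm, pos_iff_ne_zero.2 hpos, ofPred_true] at hcount
  have := Cardinal.Real.Icc_countable_iff.1 (countable_coe_iff.1 (countable_univ_iff.1 hcount))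
  exact this.not_gt hab

theorem measure_flowBox_add (hm : ∀ t, m.map (φ t) = m) {T : Set Z} (hT₀ : m T = 0)
    [CompactSpace Z] [TopologicalSpace.MetrizableSpace Z] (hT : MeasurableSet T) {a b c : ℝ}
    (hab : a ≤ b) (hbc : b ≤ c) (hinj : InjOn (fun p : ℝ × Z => φ p.1 p.2) (Icc a c ×ˢ T)) :
    m (flowBox φ T a c) = m (flowBox φ T a b) + m (flowBox φ T b c) := by
  have hslice : m (flowBox φ T b b) = 0 := by rw [flowBox_self, measure_flow_image hm, hT₀]
  rw [← flowBox_union φ T hab hbc]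
  refine measure_union₀ (measurableSet_flowBox φ T hT (hinj.mono ?_)).nullMeasurableSet
    (measure_mono_null (flowBox_inter_subset φ T hinj) hslice)
  exact prod_mono (Icc_subset_Icc hab le_rfl) subset_rfl

theorem additiveUpTo_measure_flowBox [IsFiniteMeasure m] (hm : ∀ t, m.map (φ t) = m)
    [CompactSpace Z] [TopologicalSpace.MetrizableSpace Z] {T : Set Z} (hT : MeasurableSet T)
    {a c : ℝ} (hc : 0 < c) (hinj : InjOn (fun p : ℝ × Z => φ p.1 p.2) (Icc a (a + c) ×ˢ T)) :
    AdditiveUpTo (fun t => (m (flowBox φ T a (a + t))).toReal) c := by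
  have hT₀ := measure_eq_zero_of_injOn hm hT (by linarith) hinj
  intro x y hx hy hxy
  have hshift : m (flowBox φ T (a + x) (a + x + y)) = m (flowBox φ T a (a + y)) :=
    measure_flowBox_eq_of_sub_eq hm T (by ring)
  dsimp only
  rw [← add_assoc, measure_flowBox_add hm hT₀ hT (by linarith : a ≤ a + x) (by linarith)
    (hinj.mono (prod_mono (Icc_subset_Icc le_rfl (by linarith)) subset_rfl)), hshift,
    ENNReal.toReal_add (measure_ne_top _ _) (measure_ne_top _ _)]

theorem measure_flowBox_le_div_mul [IsFiniteMeasure m] (hm : ∀ t, m.map (φ t) = m)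
    [CompactSpace Z] [TopologicalSpace.MetrizableSpace Z] {T : Set Z} (hT : MeasurableSet T)
    {a x y : ℝ} (hx : 0 ≤ x) (hy : 0 < y)
    (hinj : InjOn (fun p : ℝ × Z => φ p.1 p.2) (Icc a (a + (x + y)) ×ˢ T)) :
    (m (flowBox φ T a (a + x))).toReal ≤ x / y * (m (flowBox φ T a (a + y))).toReal :=
  (additiveUpTo_measure_flowBox hm hT (by linarith) hinj).le_div_mul
    (fun _ _ => ENNReal.toReal_nonneg) hx hy le_rfl

end InvariantMeasure

theorem measureSupport_eq_support {W : Type*} [TopologicalSpace W] [MeasurableSpace W]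
    (M : Measure W) : measureSupport M = M.support := by
  rw [Measure.support_eq_forall_isOpen]
  ext x
  simp only [measureSupport, mem_ofPred_eq, pos_iff_ne_zero]
  exact forall_congr' fun _ => Imp.swap

theorem ae_mem_of_measureSupport_subset {W : Type*} [TopologicalSpace W] [MeasurableSpace W]
    [HereditarilyLindelofSpace W] {M : Measure W} {s : Set W} (h : measureSupport M ⊆ s) :
    ∀ᵐ p ∂M, p ∈ s :=
  mem_of_superset (measureSupport_eq_support M ▸ Measure.support_mem_ae) h

namespace Transports

variable {Z : Type*} [TopologicalSpace Z] [MeasurableSpace Z] [SecondCountableTopology Z]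
  {φ : Flow ℝ Z} {L : ℝ} {m₁ m₂ : Measure Z}

theorem measure_le (h : Transports φ L m₁ m₂) {A B : Set Z} (hA : MeasurableSet A)
    (hAB : ∀ x, ∀ l ∈ Icc (-L) L, φ l x ∈ A → x ∈ B) : m₂ A ≤ m₁ B := by
  obtain ⟨M, -, hsupp, rfl, rfl⟩ := h
  rw [Measure.map_apply measurable_snd hA]
  refine (measure_mono_ae ?_).trans (Measure.le_map_apply measurable_fst.aemeasurable B)
  filter_upwards [ae_mem_of_measureSupport_subset hsupp] with ⟨x, y⟩ ⟨l, hl, hy⟩ hx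
  obtain rfl : y = φ l x := hy
  exact hAB x l hl hx

theorem le_measure (h : Transports φ L m₁ m₂) {A B : Set Z} (hA : MeasurableSet A)
    (hAB : ∀ x, ∀ l ∈ Icc (-L) L, x ∈ A → φ l x ∈ B) : m₁ A ≤ m₂ B := by
  obtain ⟨M, -, hsupp, rfl, rfl⟩ := h
  rw [Measure.map_apply measurable_fst hA]
  refine (measure_mono_ae ?_).trans (Measure.le_map_apply measurable_snd.aemeasurable B)
  filter_upwards [ae_mem_of_measureSupport_subset hsupp] with ⟨x, y⟩ ⟨l, hl, hy⟩ hx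
  obtain rfl : y = φ l x := hy
  exact hAB x l hl hx

theorem measure_flowBox_le (h : Transports φ L m₁ m₂) {T : Set Z} {a b : ℝ}
    (hB : MeasurableSet (flowBox φ T a b)) :
    m₂ (flowBox φ T a b) ≤ m₁ (flowBox φ T (a - L) (b + L)) :=
  h.measure_le hB fun _ _ hl hx =>
    flowBox_mono φ T (by linarith [hl.2]) (by linarith [hl.1]) (mem_flowBox_of_flow_mem φ T hx)

theorem measure_flowBox_ge (h : Transports φ L m₁ m₂) {T : Set Z} {a b : ℝ}
    (hB : MeasurableSet (flowBox φ T (a + L) (b - L))) :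
    m₁ (flowBox φ T (a + L) (b - L)) ≤ m₂ (flowBox φ T a b) :=
  h.le_measure hB fun _ l hl hx =>
    flowBox_mono φ T (by linarith [hl.1]) (by linarith [hl.2]) (flow_mem_flowBox φ T l hx)

theorem abs_sub_measure_flowBox_le [CompactSpace Z] [TopologicalSpace.MetrizableSpace Z]
    [BorelSpace Z] [IsFiniteMeasure m₁] [IsFiniteMeasure m₂] (h : Transports φ L m₁ m₂)
    (hm : ∀ t, m₁.map (φ t) = m₁) {T : Set Z} (hT : MeasurableSet T) (hL : 0 ≤ L) {a b : ℝ}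
    (hab : a < b) (hinj : InjOn (fun p : ℝ × Z => φ p.1 p.2) (Icc (a - L) (b + L) ×ˢ T)) :
    |(m₂ (flowBox φ T a b)).toReal - (m₁ (flowBox φ T a b)).toReal| ≤
      (m₁ (flowBox φ T (a - L) (a + L))).toReal := by
  have hmeas {a' b' : ℝ} (ha : a - L ≤ a') (hb : b' ≤ b + L) : MeasurableSet (flowBox φ T a' b') :=
    measurableSet_flowBox φ T hT (hinj.mono (prod_mono (Icc_subset_Icc ha hb) subset_rfl))
  set g := fun t => (m₁ (flowBox φ T (a - L) (a - L + t))).toReal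
  have hg : AdditiveUpTo g (b - a + 2 * L) := additiveUpTo_measure_flowBox hm hT (by linarith)
    (by rwa [show a - L + (b - a + 2 * L) = b + L by ring])
  have hbox (a' b' : ℝ) : (m₁ (flowBox φ T a' b')).toReal = g (b' - a') := by
    rw [measure_flowBox_eq_of_sub_eq hm T (show b' - a' = a - L + (b' - a') - (a - L) by ring)]
  have hupper : (m₂ (flowBox φ T a b)).toReal ≤ g (b - a) + g (2 * L) := by
    have := ENNReal.toReal_mono (measure_ne_top _ _)
      (h.measure_flowBox_le (a := a) (b := b) (hmeas (by linarith) (by linarith)))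
    rwa [hbox, show b + L - (a - L) = b - a + 2 * L by ring,
      hg (b - a) (2 * L) (by linarith) (by linarith) le_rfl] at this
  have hlower : g (b - a) - g (2 * L) ≤ (m₂ (flowBox φ T a b)).toReal := by
    rcases le_total (2 * L) (b - a) with hba | hba
    · have := ENNReal.toReal_mono (measure_ne_top _ _)
        (h.measure_flowBox_ge (a := a) (b := b) (hmeas (by linarith) (by linarith)))
      have hsplit := hg (b - a - 2 * L) (2 * L) (by linarith) (by linarith) (by linarith)
      rw [hbox, show b - L - (a + L) = b - a - 2 * L by ring] at this
      rw [sub_add_cancel] at hsplit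
      linarith
    · have := hg.monotoneOn (fun _ _ => ENNReal.toReal_nonneg) ⟨by linarith, by linarith⟩
        ⟨by linarith, by linarith⟩ hba
      linarith [ENNReal.toReal_nonneg (a := m₂ (flowBox φ T a b))]
  rw [hbox, hbox, show a + L - (a - L) = 2 * L by ring, abs_sub_le_iff]
  constructor <;> linarith

end Transports

theorem stmt_8_general {Z : Type*} [TopologicalSpace Z] [CompactSpace Z]
    [TopologicalSpace.MetrizableSpace Z] [MeasurableSpace Z] [BorelSpace Z]
    (φ : Flow ℝ Z) (α L : ℝ) (hα : 0 < α) (hL : 0 ≤ L)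
    (T₀ : Set Z) (hT₀ : MeasurableSet T₀)
    (hinj : Set.InjOn (fun p : ℝ × Z => φ p.1 p.2) (Set.Icc (-L) (α + L) ×ˢ T₀))
    (m₁ m₂ : Measure Z) [IsProbabilityMeasure m₁] [IsProbabilityMeasure m₂]
    (hminv : ∀ t : ℝ, m₁.map (fun z => φ t z) = m₁)
    (htrans : Transports φ L m₁ m₂) :
    |(m₂ ((fun p : ℝ × Z => φ p.1 p.2) '' (Set.Icc 0 α ×ˢ T₀))).toReal -
        (m₁ ((fun p : ℝ × Z => φ p.1 p.2) '' (Set.Icc 0 α ×ˢ T₀))).toReal| ≤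
      (2 * L / α) * (m₁ ((fun p : ℝ × Z => φ p.1 p.2) '' (Set.Icc 0 α ×ˢ T₀))).toReal := by
  change |(m₂ (flowBox φ T₀ 0 α)).toReal - (m₁ (flowBox φ T₀ 0 α)).toReal| ≤
    2 * L / α * (m₁ (flowBox φ T₀ 0 α)).toReal
  have hbound := htrans.abs_sub_measure_flowBox_le hminv hT₀ hL hα (by rwa [zero_sub])
  have hlin := measure_flowBox_le_div_mul hminv hT₀ (a := -L) (by linarith : 0 ≤ 2 * L) hα
    (by rwa [show -L + (2 * L + α) = α + L by ring])
  have hwindow : m₁ (flowBox φ T₀ (-L) (-L + 2 * L)) = m₁ (flowBox φ T₀ (0 - L) (0 + L)) :=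
    measure_flowBox_eq_of_sub_eq hminv T₀ (by ring)
  have hB : m₁ (flowBox φ T₀ (-L) (-L + α)) = m₁ (flowBox φ T₀ 0 α) :=
    measure_flowBox_eq_of_sub_eq hminv T₀ (by ring)
  rw [hwindow, hB] at hlin
  exact hbound.trans hlin

/-- flow boxes and transported measures: let `B = φ([0,α] × T₀)` be a
flow box of length `α` (with `(s,τ) ↦ φ(s,τ)` injective on `[−L, α+L] × T₀`), let `m₁` be
a `φ`-invariant Borel probability measure with `m₁ B > 0`, and let `m₂` be `L`-transported
from `m₁` along `φ`. Then `|m₂ B − m₁ B| ≤ (2L/α)·m₁ B`. -/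
theorem stmt_8 {Z : Type*} [TopologicalSpace Z] [CompactSpace Z]
    [TopologicalSpace.MetrizableSpace Z] [MeasurableSpace Z] [BorelSpace Z]
    (φ : Flow ℝ Z) (α L : ℝ) (hα : 0 < α) (hL : 0 ≤ L)
    (T₀ : Set Z) (hT₀ : MeasurableSet T₀)
    (hinj : Set.InjOn (fun p : ℝ × Z => φ p.1 p.2) (Set.Icc (-L) (α + L) ×ˢ T₀))
    (m₁ m₂ : Measure Z) [IsProbabilityMeasure m₁] [IsProbabilityMeasure m₂]
    (hminv : ∀ t : ℝ, m₁.map (fun z => φ t z) = m₁)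
    (hBpos : 0 < m₁ ((fun p : ℝ × Z => φ p.1 p.2) '' (Set.Icc 0 α ×ˢ T₀)))
    (htrans : Transports φ L m₁ m₂) :
    |(m₂ ((fun p : ℝ × Z => φ p.1 p.2) '' (Set.Icc 0 α ×ˢ T₀))).toReal -
        (m₁ ((fun p : ℝ × Z => φ p.1 p.2) '' (Set.Icc 0 α ×ˢ T₀))).toReal| ≤
      (2 * L / α) * (m₁ ((fun p : ℝ × Z => φ p.1 p.2) '' (Set.Icc 0 α ×ˢ T₀))).toReal :=
  stmt_8_general φ α L hα hL T₀ hT₀ hinj m₁ m₂ hminv htrans
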